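/- With the explicit so(5) operators on W(p), the vacuum vector |0,0;0⟩ satisfies f_j^-|0,0;0⟩ = 0 and [f_j^-, f_k^+]|0,0;0⟩ = p δ_{jk} |0,0;0⟩ for j,k ∈ {1,2}. -/

import Mathlib

/-!
The matrix of `f_j^-` is the transpose of that of `f_j^+`, so `f_j^-|t⟩` is determined by which
basis vectors `f_j^+` sends onto a component along `|t⟩`. No raising operator reaches the vacuum,
so `f_j^-|0,0;0⟩ = 0`. Moreover `f_j^+|0,0;0⟩ = √p |1,0;δ_{j1}⟩`, and the only vector that
`f_k^+` maps onto a component along `|1,0;δ_{j1}⟩` is the vacuum, with coefficient `√p δ_{jk}`;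
hence `[f_j^-, f_k^+]|0,0;0⟩ = f_j^- f_k^+|0,0;0⟩ = p δ_{jk} |0,0;0⟩`.
-/

namespace StmtSO5

variable (p : ℕ)

/-- Validity of a triple `(m₁₂, m₂₂, m₁₁)`: `p ≥ m₁₂ ≥ m₁₁ ≥ m₂₂ ≥ 0`. -/
def valid (t : ℕ × ℕ × ℕ) : Prop := t.2.1 ≤ t.2.2 ∧ t.2.2 ≤ t.1 ∧ t.1 ≤ p

instance (t : ℕ × ℕ × ℕ) : Decidable (valid p t) := by unfold valid; infer_instance

/-- The so(5) Fock space `W(p)`: the real vector space with basis the valid triples. -/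
abbrev V := {t : ℕ × ℕ × ℕ // valid p t} →₀ ℝ

/-- The basis vector `|m₁₂,m₂₂;m₁₁⟩`, interpreted as `0` when the triple is out of range. -/
noncomputable def b (t : ℕ × ℕ × ℕ) : V p :=
  if h : valid p t then Finsupp.single ⟨t, h⟩ 1 else 0

/-- The inner product making the basis vectors orthonormal. -/
noncomputable def ip (u v : V p) : ℝ := u.sum fun t c => c * v t

/-- The defining matrix elements of `f₁⁺`. -/
def F1pAction (f1p : V p →ₗ[ℝ] V p) : Prop :=
  ∀ m12 m22 m11 : ℕ, valid p (m12, m22, m11) →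
    f1p (b p (m12, m22, m11)) =
      Real.sqrt (((m11 : ℝ) - m22 + 1) * ((p : ℝ) - m12)) • b p (m12 + 1, m22, m11 + 1) -
      Real.sqrt (((m12 : ℝ) - m11) * ((m22 : ℝ) + 1)) • b p (m12, m22 + 1, m11 + 1)

/-- The defining matrix elements of `f₂⁺`. -/
def F2pAction (f2p : V p →ₗ[ℝ] V p) : Prop :=
  ∀ m12 m22 m11 : ℕ, valid p (m12, m22, m11) →
    f2p (b p (m12, m22, m11)) =
      Real.sqrt (((m12 : ℝ) - m11 + 1) * ((p : ℝ) - m12)) • b p (m12 + 1, m22, m11) +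
      Real.sqrt (((m11 : ℝ) - m22) * ((m22 : ℝ) + 1)) • b p (m12, m22 + 1, m11)

/-- `g` is the adjoint (transpose with respect to the given orthonormal basis) of `f`. -/
def IsAdjoint (f g : V p →ₗ[ℝ] V p) : Prop := ∀ u v : V p, ip p (g u) v = ip p u (f v)

lemma b_of_valid {t : ℕ × ℕ × ℕ} (ht : valid p t) : b p t = Finsupp.single ⟨t, ht⟩ 1 :=
  dif_pos ht

lemma b_apply (t : ℕ × ℕ × ℕ) (s : {u // valid p u}) :
    b p t s = if t = s.1 then 1 else 0 := by
  by_cases ht : valid p t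
  · simp [b_of_valid p ht, Finsupp.single_apply, Subtype.ext_iff]
  · have : t ≠ s.1 := fun h => ht (h ▸ s.2)
    simp [b, ht, this]

lemma ip_single_left (s : {t // valid p t}) (v : V p) : ip p (Finsupp.single s 1) v = v s := by
  simp [ip]

lemma ip_single_right (u : V p) (s : {t // valid p t}) : ip p u (Finsupp.single s 1) = u s := by
  simpa [ip, Finsupp.single_apply] using Eq.symm

variable {p}

lemma IsAdjoint.apply_b_apply {f g : V p →ₗ[ℝ] V p} (hfg : IsAdjoint p f g)
    {t : ℕ × ℕ × ℕ} (ht : valid p t) (s : {u // valid p u}) :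
    g (b p t) s = f (b p s.1) ⟨t, ht⟩ := by
  have := hfg (Finsupp.single ⟨t, ht⟩ 1) (Finsupp.single s 1)
  rwa [ip_single_right, ip_single_left, ← b_of_valid, ← b_of_valid p s.2] at this

lemma IsAdjoint.map_b_eq_smul {f g : V p →ₗ[ℝ] V p} (hfg : IsAdjoint p f g)
    {t : ℕ × ℕ × ℕ} (ht : valid p t) (t' : ℕ × ℕ × ℕ) (c : ℝ)
    (hf : ∀ s : {u // valid p u}, f (b p s.1) ⟨t, ht⟩ = if s.1 = t' then c else 0) :
    g (b p t) = c • b p t' := by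
  ext s
  simp [hfg.apply_b_apply ht, hf, b_apply, eq_comm]

lemma IsAdjoint.map_b_eq_zero {f g : V p →ₗ[ℝ] V p} (hfg : IsAdjoint p f g)
    {t : ℕ × ℕ × ℕ} (ht : valid p t) (hf : ∀ s : {u // valid p u}, f (b p s.1) ⟨t, ht⟩ = 0) :
    g (b p t) = 0 := by
  simpa using hfg.map_b_eq_smul ht t 0 (by simpa using hf)

lemma valid_zero : valid p (0, 0, 0) := ⟨le_rfl, le_rfl, Nat.zero_le p⟩

lemma valid_one_zero_zero (hp : 0 < p) : valid p (1, 0, 0) := ⟨le_rfl, zero_le_one, hp⟩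

lemma valid_one_zero_one (hp : 0 < p) : valid p (1, 0, 1) := ⟨zero_le_one, le_rfl, hp⟩

lemma F1pAction.apply_vacuum {f : V p →ₗ[ℝ] V p} (hf : F1pAction p f) :
    f (b p (0, 0, 0)) = √p • b p (1, 0, 1) := by
  simpa using hf 0 0 0 valid_zero

lemma F2pAction.apply_vacuum {f : V p →ₗ[ℝ] V p} (hf : F2pAction p f) :
    f (b p (0, 0, 0)) = √p • b p (1, 0, 0) := by
  simpa using hf 0 0 0 valid_zero

variable {f g : V p →ₗ[ℝ] V p}

lemma F1pAction.adjoint_map_vacuum (hf : F1pAction p f) (hfg : IsAdjoint p f g) :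
    g (b p (0, 0, 0)) = 0 :=
  hfg.map_b_eq_zero valid_zero fun ⟨(m12, m22, m11), hs⟩ => by simp [hf m12 m22 m11 hs, b_apply]

lemma F2pAction.adjoint_map_vacuum (hf : F2pAction p f) (hfg : IsAdjoint p f g) :
    g (b p (0, 0, 0)) = 0 :=
  hfg.map_b_eq_zero valid_zero fun ⟨(m12, m22, m11), hs⟩ => by simp [hf m12 m22 m11 hs, b_apply]

lemma F1pAction.adjoint_map_b_one_zero_one (hp : 0 < p) (hf : F1pAction p f)
    (hfg : IsAdjoint p f g) : g (b p (1, 0, 1)) = √p • b p (0, 0, 0) :=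
  hfg.map_b_eq_smul (valid_one_zero_one hp) _ _ fun ⟨(m12, m22, m11), hs⟩ => by
    simp only [hf m12 m22 m11 hs, Finsupp.sub_apply, Finsupp.smul_apply, b_apply]
    split_ifs <;> simp_all

lemma F2pAction.adjoint_map_b_one_zero_zero (hp : 0 < p) (hf : F2pAction p f)
    (hfg : IsAdjoint p f g) : g (b p (1, 0, 0)) = √p • b p (0, 0, 0) :=
  hfg.map_b_eq_smul (valid_one_zero_zero hp) _ _ fun ⟨(m12, m22, m11), hs⟩ => by
    simp only [hf m12 m22 m11 hs, Finsupp.add_apply, Finsupp.smul_apply, b_apply]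
    split_ifs <;> simp_all

lemma F1pAction.adjoint_map_b_one_zero_zero (hp : 0 < p) (hf : F1pAction p f)
    (hfg : IsAdjoint p f g) : g (b p (1, 0, 0)) = 0 :=
  hfg.map_b_eq_zero (valid_one_zero_zero hp) fun ⟨(m12, m22, m11), hs⟩ => by
    simp [hf m12 m22 m11 hs, b_apply]

lemma F2pAction.adjoint_map_b_one_zero_one (hp : 0 < p) (hf : F2pAction p f)
    (hfg : IsAdjoint p f g) : g (b p (1, 0, 1)) = 0 :=
  hfg.map_b_eq_zero (valid_one_zero_one hp) fun ⟨(m12, m22, m11), hs⟩ => by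
    have : m11 ≤ m12 := hs.2.1
    simp [hf m12 m22 m11 hs, b_apply]
    omega

/-- with the explicit so(5) operators on `W(p)`, the vacuum `|0,0;0⟩`
satisfies `f_j^-|0,0;0⟩ = 0` and `[f_j^-, f_k^+]|0,0;0⟩ = p δ_{jk} |0,0;0⟩` for
`j,k ∈ {1,2}`. -/
theorem so5_vacuum_relations (hp : 0 < p)
    (f1p f2p f1m f2m : V p →ₗ[ℝ] V p)
    (h1 : F1pAction p f1p) (h2 : F2pAction p f2p)
    (h1m : IsAdjoint p f1p f1m) (h2m : IsAdjoint p f2p f2m) :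
    let v0 : V p := b p (0, 0, 0)
    f1m v0 = 0 ∧ f2m v0 = 0 ∧
    f1m (f1p v0) - f1p (f1m v0) = (p : ℝ) • v0 ∧
    f2m (f2p v0) - f2p (f2m v0) = (p : ℝ) • v0 ∧
    f1m (f2p v0) - f2p (f1m v0) = 0 ∧
    f2m (f1p v0) - f1p (f2m v0) = 0 := by
  intro v0
  have sqrt_mul_self : √(p : ℝ) * √p = p := Real.mul_self_sqrt p.cast_nonneg
  refine ⟨h1.adjoint_map_vacuum h1m, h2.adjoint_map_vacuum h2m, ?_, ?_, ?_, ?_⟩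
  · simp [v0, h1.adjoint_map_vacuum h1m, h1.apply_vacuum,
      h1.adjoint_map_b_one_zero_one hp h1m, smul_smul, sqrt_mul_self]
  · simp [v0, h2.adjoint_map_vacuum h2m, h2.apply_vacuum,
      h2.adjoint_map_b_one_zero_zero hp h2m, smul_smul, sqrt_mul_self]
  · simp [v0, h1.adjoint_map_vacuum h1m, h2.apply_vacuum, h1.adjoint_map_b_one_zero_zero hp h1m]
  · simp [v0, h2.adjoint_map_vacuum h2m, h1.apply_vacuum, h2.adjoint_map_b_one_zero_one hp h2m]

end StmtSO5
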